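/- arXiv:1408.3671 — 2 statements merged into one kernel-verified Lean document; each statement's English description precedes it below -/
import Mathlib

section
/- For all integers s and j with 1 ≤ j < s: s!/(s − j)! > exp(j·ln s − j²/s − 1); equivalently, s!/(s − j)! > s^j · e^{−j²/s − 1}. -/
/-!
Since `log (n + 1)! - log n! = log (n + 1)` dominates the increment of `n log n - n`
(equivalently `n log (1 + 1/n) ≤ 1`), the difference `log n! - (n log n - n)` is nondecreasing, so
with `a = s - j` we get `log (s!/a!) ≥ s log s - a log a - j`. The bound `log (a/s) ≤ a/s - 1`
gives `a log a ≤ a log s - a j / s`, and the right-hand side becomes `j log s - j²/s`; the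
extra `-1` in the claim only makes the inequality strict.
-/

open Real
open scoped Nat

lemma mul_log_add_one_sub_log_le_one {x : ℝ} (hx : 0 ≤ x) : x * (log (x + 1) - log x) ≤ 1 := by
  rcases hx.eq_or_lt with rfl | hx
  · simp
  have h : log (x + 1) - log x ≤ 1 / x := by
    rw [← log_div (by positivity) hx.ne']
    calc log ((x + 1) / x) ≤ (x + 1) / x - 1 := log_le_sub_one_of_pos (by positivity)
      _ = 1 / x := by field_simp; ring
  calc x * (log (x + 1) - log x) ≤ x * (1 / x) := by gcongr
    _ = 1 := by field_simp

lemma monotone_log_factorial_sub_mul_log :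
    Monotone fun n : ℕ ↦ log (n ! : ℝ) - (n * log n - n) := by
  refine monotone_nat_of_le_succ fun n ↦ ?_
  have h := mul_log_add_one_sub_log_le_one (Nat.cast_nonneg (α := ℝ) n)
  rw [Nat.factorial_succ, Nat.cast_mul, log_mul (by positivity) (by positivity)]
  push_cast
  nlinarith

lemma mul_log_le_mul_log_sub {a s : ℝ} (ha : 0 ≤ a) (hs : 0 < s) :
    a * log a ≤ a * log s - a * (s - a) / s := by
  rcases ha.eq_or_lt with rfl | ha
  · simp
  have h : log a - log s ≤ -((s - a) / s) := by
    rw [← log_div ha.ne' hs.ne']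
    calc log (a / s) ≤ a / s - 1 := log_le_sub_one_of_pos (by positivity)
      _ = -((s - a) / s) := by field_simp; ring
  have hmul := mul_le_mul_of_nonneg_left h ha.le
  linarith [mul_div_assoc a (s - a) s]

theorem statement7_general (s j : ℕ) (hjs : j < s) :
    Real.exp ((j : ℝ) * Real.log (s : ℝ) - (j : ℝ) ^ 2 / (s : ℝ) - 1) <
      (Nat.factorial s : ℝ) / (Nat.factorial (s - j) : ℝ) := by
  have hs : (0 : ℝ) < s := by exact_mod_cast (j.zero_le.trans_lt hjs)
  have hsj : ((s - j : ℕ) : ℝ) = s - j := Nat.cast_sub hjs.le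
  have hmono := monotone_log_factorial_sub_mul_log (Nat.sub_le s j)
  have hlog := mul_log_le_mul_log_sub (Nat.cast_nonneg (α := ℝ) (s - j)) hs
  rw [← exp_log (by positivity : (0 : ℝ) < s ! / (s - j)!), exp_lt_exp,
    log_div (by positivity) (by positivity)]
  simp only [hsj] at hmono hlog ⊢
  have hquad : (s - j : ℝ) * (s - (s - j)) / s = j - j ^ 2 / s := by field_simp; ring
  linarith

/-- For integers `1 ≤ j < s`: `s!/(s − j)! > exp(j·ln s − j²/s − 1)`. -/
theorem statement7 (s j : ℕ) (hj : 1 ≤ j) (hjs : j < s) :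
    Real.exp ((j : ℝ) * Real.log (s : ℝ) - (j : ℝ) ^ 2 / (s : ℝ) - 1) <
      (Nat.factorial s : ℝ) / (Nat.factorial (s - j) : ℝ) :=
  statement7_general s j hjs
end

section
/- Let ε ∈ (0, 1/8), let k and s be integers with k ≥ 2 and s ≥ 2, let p = (1/8)·ln(min(k, s)) and x = k/p, and assume 2p + ln(2p) < 3p. Let j and r′ be positive integers with r′ ≤ j ≤ 2p and j ≤ s − 2. Let F be a family of finite sets, each of cardinality at most s, such that for every nonempty finite set S with |S| < s, the number of U ∈ F with S ⊆ U is at most Φ₂(s − |S|). Let B′ be a finite set with |B′| ≤ r′·s, and let H be a finite subfamily of {U ∈ F : |U ∩ B′| = j} with |H| > s^j · Φ₂(s − j) · e^{−4p}. Then for every v ∉ B′, the number of U ∈ H containing v is at most (e^{7p}/((s − j)·x))·|H|. -/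
/-!
Every `U ∈ H` through `v` contains `insert v (U ∩ B')`, a set of size `j + 1`, so there are at
most `C(|B'|, j) · Φ₂(s - j - 1)` of them. As `|B'| ≤ r' s ≤ j s`, `C(|B'|, j) ≤ e^j s^j`; and
`Φ₂(s - j - 1) = p_{s-j} Φ₂(s - j) / (k (s - j))` with `p_{s-j} ≤ p` because `ε < 1/8`. Since
`e^j ≤ e^{3p}`, the lower bound on `|H|` absorbs the remaining factor `s^j Φ₂(s - j) e^{-4p}`.
-/

open Finset Real
open scoped Nat

/-- `p_j`: equals `ε` for `j = 1` (and `j = 0`) and `ε · ln (min j k)` for `j ≥ 2`. -/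
noncomputable def pstep (ε : ℝ) (k : ℕ) (j : ℕ) : ℝ :=
  if j ≤ 1 then ε else ε * Real.log (min (j : ℝ) (k : ℝ))

/-- `Φ₂(s) = k^s · s! / (p₁ p₂ ⋯ p_s)`. -/
noncomputable def Phi2 (ε : ℝ) (k : ℕ) (s : ℕ) : ℝ :=
  ((k : ℝ) ^ s * (Nat.factorial s : ℝ)) / ∏ j ∈ Finset.Icc 1 s, pstep ε k j

section Phi2

variable {ε : ℝ} {k : ℕ}

lemma pstep_pos (hε : 0 < ε) (hk : 2 ≤ k) (j : ℕ) : 0 < pstep ε k j := by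
  unfold pstep
  split_ifs with hj
  · exact hε
  · have h2 : (2 : ℝ) ≤ min (j : ℝ) k :=
      le_min (by exact_mod_cast (by omega : 2 ≤ j)) (by exact_mod_cast hk)
    exact mul_pos hε (log_pos (by linarith))

lemma pstep_le_log_min (hε : ε ≤ 1 / 8) (hk : 1 ≤ k) {m s : ℕ} (hm : 2 ≤ m)
    (hms : m ≤ s) : pstep ε k m ≤ 1 / 8 * log (min (k : ℝ) s) := by
  rw [pstep, if_neg (by omega)]
  have h1 : (1 : ℝ) ≤ min (m : ℝ) k :=
    le_min (by exact_mod_cast (by omega : 1 ≤ m)) (by exact_mod_cast hk)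
  have h2 : min (m : ℝ) k ≤ min (k : ℝ) s :=
    le_min (min_le_right _ _) ((min_le_left _ _).trans (by exact_mod_cast hms))
  calc ε * log (min (m : ℝ) k) ≤ 1 / 8 * log (min (m : ℝ) k) :=
        mul_le_mul_of_nonneg_right hε (log_nonneg h1)
    _ ≤ 1 / 8 * log (min (k : ℝ) s) :=
        mul_le_mul_of_nonneg_left (log_le_log (by linarith) h2) (by norm_num)

lemma Phi2_nonneg (hε : 0 < ε) (hk : 2 ≤ k) (n : ℕ) : 0 ≤ Phi2 ε k n :=
  div_nonneg (by positivity) (prod_pos fun j _ => pstep_pos hε hk j).le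

lemma Phi2_succ (ε : ℝ) (k n : ℕ) :
    Phi2 ε k (n + 1) = Phi2 ε k n * (k * (n + 1)) / pstep ε k (n + 1) := by
  rw [Phi2, Phi2, prod_Icc_succ_top (by omega), pow_succ, Nat.factorial_succ]
  push_cast
  ring

lemma Phi2_le_mul_Phi2_succ (hε : 0 < ε) (hk : 2 ≤ k) {n : ℕ} {p : ℝ}
    (hp : pstep ε k (n + 1) ≤ p) : Phi2 ε k n ≤ p / (k * (n + 1)) * Phi2 ε k (n + 1) := by
  have hq := pstep_pos hε hk (n + 1)
  have hk0 : (0 : ℝ) < k := by exact_mod_cast (by omega : 0 < k)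
  have hcancel : p / (k * (n + 1)) * (Phi2 ε k n * (k * (n + 1)) / pstep ε k (n + 1)) =
      Phi2 ε k n * (p / pstep ε k (n + 1)) := by
    field_simp
  rw [Phi2_succ, hcancel]
  exact le_mul_of_one_le_right (Phi2_nonneg hε hk n) ((one_le_div hq).2 hp)

end Phi2

lemma card_filter_mem_le_choose_mul {α : Type*} [DecidableEq α] {F H : Finset (Finset α)}
    {B : Finset α} {j : ℕ} (hH : H ⊆ F.filter fun U => (U ∩ B).card = j) (v : α) {M : ℝ}
    (hM : ∀ T ⊆ B, T.card = j → ((F.filter fun U => insert v T ⊆ U).card : ℝ) ≤ M) :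
    ((H.filter fun U => v ∈ U).card : ℝ) ≤ B.card.choose j * M := by
  have hcover : H.filter (v ∈ ·) ⊆
      (B.powersetCard j).biUnion fun T => F.filter (insert v T ⊆ ·) := by
    intro U hU
    rw [mem_filter] at hU
    obtain ⟨hUF, hUB⟩ := mem_filter.1 (hH hU.1)
    exact mem_biUnion.2 ⟨U ∩ B, mem_powersetCard.2 ⟨inter_subset_right, hUB⟩,
      mem_filter.2 ⟨hUF, insert_subset hU.2 inter_subset_left⟩⟩
  calc ((H.filter (v ∈ ·)).card : ℝ)
      ≤ ∑ T ∈ B.powersetCard j, ((F.filter (insert v T ⊆ ·)).card : ℝ) := by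
        exact_mod_cast (card_le_card hcover).trans card_biUnion_le
    _ ≤ ∑ _T ∈ B.powersetCard j, M :=
        sum_le_sum fun T hT => hM T (mem_powersetCard.1 hT).1 (mem_powersetCard.1 hT).2
    _ = B.card.choose j * M := by rw [sum_const, card_powersetCard, nsmul_eq_mul]

lemma choose_le_exp_mul_pow {n j s : ℕ} (hn : n ≤ j * s) :
    (n.choose j : ℝ) ≤ exp j * s ^ j :=
  calc (n.choose j : ℝ) ≤ ((j * s).choose j : ℝ) := by exact_mod_cast Nat.choose_le_choose j hn
    _ ≤ ((j * s : ℕ) : ℝ) ^ j / j ! := Nat.choose_le_pow_div j _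
    _ = (j : ℝ) ^ j / j ! * s ^ j := by push_cast; ring
    _ ≤ exp j * s ^ j := by gcongr; exact pow_div_factorial_le_exp _ (by positivity) j

theorem statement15_general (α : Type*) [DecidableEq α] (ε : ℝ) (hε0 : 0 < ε) (hε : ε < 1 / 8)
    (k s : ℕ) (hk : 2 ≤ k) (hs : 2 ≤ s)
    (p x : ℝ) (hp : p = 1 / 8 * Real.log (min (k : ℝ) (s : ℝ))) (hx : x = (k : ℝ) / p)
    (j r' : ℕ) (hr'j : r' ≤ j)
    (hj2p : (j : ℝ) ≤ 2 * p) (hjs : j ≤ s - 2)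
    (F : Finset (Finset α))
    (hsup : ∀ S : Finset α, S.Nonempty → S.card < s →
      ((F.filter fun U => S ⊆ U).card : ℝ) ≤ Phi2 ε k (s - S.card))
    (B' : Finset α) (hB' : B'.card ≤ r' * s)
    (H : Finset (Finset α)) (hH : H ⊆ F.filter fun U => (U ∩ B').card = j)
    (hHcard : (s : ℝ) ^ j * Phi2 ε k (s - j) * Real.exp (-(4 * p)) < (H.card : ℝ)) :
    ∀ v ∉ B', ((H.filter fun U => v ∈ U).card : ℝ) ≤
      Real.exp (7 * p) / (((s : ℝ) - (j : ℝ)) * x) * (H.card : ℝ) := by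
  intro v hv
  obtain ⟨n, hn⟩ : ∃ n, s - j = n + 1 := ⟨s - j - 1, by omega⟩
  have hn_cast : (n : ℝ) + 1 = s - j := by
    rw [← Nat.cast_sub (by omega), hn]; push_cast; ring
  have hp0 : 0 < p :=
    hp ▸ mul_pos (by norm_num) (log_pos (lt_min (by exact_mod_cast hk) (by exact_mod_cast hs)))
  have hstar : ∀ T ⊆ B', T.card = j →
      ((F.filter fun U => insert v T ⊆ U).card : ℝ) ≤ Phi2 ε k n := fun T hTB hT => by
    have hvT : (insert v T).card = j + 1 := by rw [card_insert_of_notMem (hv <| hTB ·), hT]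
    simpa [hvT, show s - (j + 1) = n by omega] using
      hsup (insert v T) (insert_nonempty v T) (by omega)
  have hpstep : pstep ε k (n + 1) ≤ p :=
    hp ▸ pstep_le_log_min hε.le (by omega) (by omega) (by omega)
  rw [hn] at hHcard
  calc ((H.filter fun U => v ∈ U).card : ℝ) ≤ B'.card.choose j * Phi2 ε k n :=
        card_filter_mem_le_choose_mul hH v hstar
    _ ≤ exp j * s ^ j * Phi2 ε k n := by
        gcongr
        · exact Phi2_nonneg hε0 hk n
        · exact choose_le_exp_mul_pow (hB'.trans (Nat.mul_le_mul_right s hr'j))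
    _ ≤ exp (3 * p) * s ^ j * (p / (k * (n + 1)) * Phi2 ε k (n + 1)) := by
        gcongr ?_ * _ * ?_
        · exact Phi2_nonneg hε0 hk n
        · exact exp_le_exp.2 (by linarith)
        · exact Phi2_le_mul_Phi2_succ hε0 hk hpstep
    _ = exp (7 * p) / ((s - j) * x) * (s ^ j * Phi2 ε k (n + 1) * exp (-(4 * p))) := by
        rw [hx, ← hn_cast, show 7 * p = 3 * p + 4 * p by ring, exp_add, exp_neg]
        field_simp
    _ ≤ exp (7 * p) / ((s - j) * x) * H.card := by
        gcongr
        rw [hx, ← hn_cast]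
        positivity

/-- For `v ∉ B′`, the number of `U ∈ H` containing `v` is at most
`(e^{7p}/((s − j)·x))·|H|`. -/
theorem statement15 (α : Type*) [DecidableEq α] (ε : ℝ) (hε0 : 0 < ε) (hε : ε < 1 / 8)
    (k s : ℕ) (hk : 2 ≤ k) (hs : 2 ≤ s)
    (p x : ℝ) (hp : p = 1 / 8 * Real.log (min (k : ℝ) (s : ℝ))) (hx : x = (k : ℝ) / p)
    (hln : 2 * p + Real.log (2 * p) < 3 * p)
    (j r' : ℕ) (hj : 0 < j) (hr' : 0 < r') (hr'j : r' ≤ j)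
    (hj2p : (j : ℝ) ≤ 2 * p) (hjs : j ≤ s - 2)
    (F : Finset (Finset α)) (hcard : ∀ U ∈ F, U.card ≤ s)
    (hsup : ∀ S : Finset α, S.Nonempty → S.card < s →
      ((F.filter fun U => S ⊆ U).card : ℝ) ≤ Phi2 ε k (s - S.card))
    (B' : Finset α) (hB' : B'.card ≤ r' * s)
    (H : Finset (Finset α)) (hH : H ⊆ F.filter fun U => (U ∩ B').card = j)
    (hHcard : (s : ℝ) ^ j * Phi2 ε k (s - j) * Real.exp (-(4 * p)) < (H.card : ℝ)) :
    ∀ v ∉ B', ((H.filter fun U => v ∈ U).card : ℝ) ≤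
      Real.exp (7 * p) / (((s : ℝ) - (j : ℝ)) * x) * (H.card : ℝ) :=
  statement15_general α ε hε0 hε k s hk hs p x hp hx j r' hr'j hj2p hjs F hsup B' hB' H hH hHcard
end
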